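/- Let n ≥ 2 and β > 0, and let γ : [0,∞) → ℝ be a C¹ solution of the LN-Scaling symmetric cosine-similarity ODE γ̇(t) = 2 e^{βγ(t)} (1 − γ(t)) ((n−1)γ(t) + 1) / ( √(t+1) ((n−1) e^{βγ(t)} + e^{β}) ) with γ(0) = 0. Then γ is increasing with 0 ≤ γ(t) < 1, γ(t) → 1 as t → ∞, and lim_{t→∞} log(1 − γ(t)) / √t = −4. -/

import Mathlib

/-!
With `c = n - 1` and `G y = 2e^{βy} / (c e^{βy} + e^β)` the equation reads
`γ' = G(γ) (1 - γ) (c γ + 1) / √(t + 1)`. Both `1 - γ` and `c γ + 1` solve linear equations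
`w' = h w` with continuous `h`, so by uniqueness of the zero solution they stay positive, and
`γ' ≥ 0`. For `u = log (1 - γ)` one gets `u' = -G(γ) (c γ + 1) / √(t + 1)`. As `0 ≤ γ < 1`,
the numerator is at most `-min_{[0, 1]} G < 0`, so `u → -∞` and `γ → 1`; then it tends to
`-G(1) (c + 1) = -2`, and comparing `u` with multiples of `√(t + 1)`, whose derivative is
`1 / (2√(t + 1))`, gives `u t / √t → -4`.
-/

open Filter Real Set Topology

lemma monotoneOn_Ici_of_hasDerivAt_nonneg {f f' : ℝ → ℝ} {a : ℝ}
    (hf : ∀ t ≥ a, HasDerivAt f (f' t) t) (hf' : ∀ t ≥ a, 0 ≤ f' t) :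
    MonotoneOn f (Ici a) :=
  monotoneOn_of_hasDerivWithinAt_nonneg (convex_Ici a)
    (fun t ht => (hf t ht).continuousAt.continuousWithinAt)
    (fun t ht => (hf t (le_of_lt (by simpa using ht))).hasDerivWithinAt)
    (fun t ht => hf' t (le_of_lt (by simpa using ht)))

/- If `w` vanished somewhere, backward uniqueness for the linear equation `w' = h w` (Lipschitz
on a compact interval) would make `w` vanish at `a` too. -/
lemma pos_of_hasDerivAt_eq_mul_self {w h : ℝ → ℝ} {a : ℝ}
    (hw : ∀ t ≥ a, HasDerivAt w (h t * w t) t) (hh : ContinuousOn h (Ici a)) (ha : 0 < w a) :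
    ∀ t ≥ a, 0 < w t := by
  by_contra! hneg
  obtain ⟨t₀, ht₀, hwt₀⟩ := hneg
  have hwc : ContinuousOn w (Ici a) := fun t ht => (hw t ht).continuousAt.continuousWithinAt
  obtain ⟨b, hb, hwb⟩ := intermediate_value_Icc' ht₀ (hwc.mono Icc_subset_Ici_self)
    ⟨hwt₀, ha.le⟩
  obtain ⟨K, hK⟩ :=
    isCompact_Icc.exists_bound_of_continuousOn (hh.mono (Icc_subset_Ici_self : Icc a b ⊆ _))
  have hzero : EqOn w 0 (Icc a b) :=
    ODE_solution_unique_of_mem_Icc_left (v := fun t x => h t * x) (s := fun _ => univ)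
      (K := K.toNNReal)
      (fun t ht => by
        have hKt := hK t (Ioc_subset_Icc_self ht)
        refine ((lipschitzWith_smul (h t)).weaken ?_).lipschitzOnWith
        rwa [Real.le_toNNReal_iff_coe_le ((norm_nonneg _).trans hKt)])
      (hwc.mono Icc_subset_Ici_self)
      (fun t ht => (hw t ht.1.le).hasDerivWithinAt) (fun _ _ => trivial)
      continuousOn_const
      (fun t _ => by rw [Pi.zero_apply, mul_zero]; exact hasDerivWithinAt_const t _ 0)
      (fun _ _ => trivial) hwb
  exact ha.ne' (hzero (left_mem_Icc.2 hb.1))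

lemma hasDerivAt_sqrt_add_one {t : ℝ} (ht : -1 < t) :
    HasDerivAt (fun t => √(t + 1)) (1 / (2 * √(t + 1))) t :=
  ((hasDerivAt_id t).add_const 1).sqrt (by simp; linarith)

lemma tendsto_add_mul_sqrt_add_one_div_sqrt (C K : ℝ) :
    Tendsto (fun t => (C + K * √(t + 1)) / √t) atTop (𝓝 K) := by
  have hratio : Tendsto (fun t : ℝ => √(1 + t⁻¹)) atTop (𝓝 1) := by
    simpa using (tendsto_inv_atTop_zero.const_add 1).sqrt
  have hsum := (tendsto_const_nhds (x := C)).div_atTop tendsto_sqrt_atTop |>.add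
    (hratio.const_mul K)
  rw [zero_add, mul_one] at hsum
  refine hsum.congr' ?_
  filter_upwards [eventually_gt_atTop 0] with t ht
  rw [add_div, mul_div_assoc, ← sqrt_div' _ ht.le, add_div, div_self ht.ne', one_div]

section DerivDivSqrt

variable {u v : ℝ → ℝ}

lemma le_add_of_hasDerivAt_div_sqrt_add_one {T m : ℝ} (hT : -1 < T)
    (hu : ∀ t ≥ T, HasDerivAt u (v t / √(t + 1)) t) (hm : ∀ t ≥ T, v t ≤ m)
    {t : ℝ} (ht : T ≤ t) : u t ≤ u T + 2 * m * (√(t + 1) - √(T + 1)) := by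
  have hmono : MonotoneOn (fun s => 2 * m * √(s + 1) - u s) (Ici T) := by
    refine monotoneOn_Ici_of_hasDerivAt_nonneg
      (fun s hs => ((hasDerivAt_sqrt_add_one (by linarith)).const_mul (2 * m)).sub (hu s hs))
      fun s hs => ?_
    rw [sub_nonneg, mul_one_div, mul_div_mul_left _ _ two_ne_zero]
    exact div_le_div_of_nonneg_right (hm s hs) (sqrt_nonneg _)
  have := hmono self_mem_Ici ht ht
  linarith

lemma tendsto_atBot_of_hasDerivAt_div_sqrt_add_one {T m : ℝ} (hT : -1 < T) (hm0 : m < 0)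
    (hu : ∀ t ≥ T, HasDerivAt u (v t / √(t + 1)) t) (hm : ∀ t ≥ T, v t ≤ m) :
    Tendsto u atTop atBot := by
  have hsqrt : Tendsto (fun t => √(t + 1)) atTop atTop :=
    tendsto_sqrt_atTop.comp (tendsto_atTop_add_const_right _ 1 tendsto_id)
  refine tendsto_atBot_mono' atTop ?_
    ((hsqrt.atTop_add (tendsto_const_nhds (x := -√(T + 1)))).const_mul_atTop_of_neg
      (by linarith : 2 * m < 0) |>.atBot_add (tendsto_const_nhds (x := u T)))
  filter_upwards [eventually_ge_atTop T] with t ht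
  linarith [le_add_of_hasDerivAt_div_sqrt_add_one hT hu hm ht]

lemma eventually_div_sqrt_lt_of_hasDerivAt_div_sqrt_add_one {m b : ℝ}
    (hu : ∀ᶠ t in atTop, HasDerivAt u (v t / √(t + 1)) t) (hm : ∀ᶠ t in atTop, v t ≤ m)
    (hb : 2 * m < b) : ∀ᶠ t in atTop, u t / √t < b := by
  obtain ⟨T, hT⟩ := eventually_atTop.1 ((hu.and hm).and (eventually_ge_atTop 0))
  have hlim := tendsto_add_mul_sqrt_add_one_div_sqrt (u T - 2 * m * √(T + 1)) (2 * m)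
  filter_upwards [hlim.eventually (eventually_lt_nhds hb), eventually_ge_atTop T]
    with t hlt hTt
  have hbound := le_add_of_hasDerivAt_div_sqrt_add_one (by linarith [(hT T le_rfl).2])
    (fun s hs => (hT s hs).1.1) (fun s hs => (hT s hs).1.2) hTt
  calc u t / √t ≤ (u T - 2 * m * √(T + 1) + 2 * m * √(t + 1)) / √t :=
        div_le_div_of_nonneg_right (by linarith) (sqrt_nonneg _)
    _ < b := hlt

lemma tendsto_div_sqrt_of_hasDerivAt_div_sqrt_add_one {ℓ : ℝ}
    (hu : ∀ᶠ t in atTop, HasDerivAt u (v t / √(t + 1)) t) (hv : Tendsto v atTop (𝓝 ℓ)) :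
    Tendsto (fun t => u t / √t) atTop (𝓝 (2 * ℓ)) := by
  refine tendsto_order.2 ⟨fun b hb => ?_, fun b hb => ?_⟩
  · obtain ⟨m, hℓm, hmb⟩ := exists_between (show -ℓ < -b / 2 by linarith)
    have hneg := eventually_div_sqrt_lt_of_hasDerivAt_div_sqrt_add_one (u := -u) (v := -v)
      (hu.mono fun t h => h.neg.congr_deriv (neg_div _ _).symm)
      ((hv.neg.eventually (eventually_lt_nhds hℓm)).mono fun t h => h.le)
      (show 2 * m < -b by linarith)
    filter_upwards [hneg] with t ht
    simpa [neg_div] using ht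
  · obtain ⟨m, hℓm, hmb⟩ := exists_between (show ℓ < b / 2 by linarith)
    exact eventually_div_sqrt_lt_of_hasDerivAt_div_sqrt_add_one hu
      ((hv.eventually (eventually_lt_nhds hℓm)).mono fun t h => h.le) (by linarith)

end DerivDivSqrt

lemma pos_of_hasDerivAt_logistic {x k : ℝ → ℝ} {a c : ℝ} (hk : ContinuousOn k (Ici a))
    (hx1 : x a < 1) (hxc : 0 < c * x a + 1)
    (hx : ∀ t ≥ a, HasDerivAt x (k t * (1 - x t) * (c * x t + 1)) t) :
    ∀ t ≥ a, 0 < 1 - x t ∧ 0 < c * x t + 1 := by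
  have hxcont : ContinuousOn x (Ici a) := fun t ht => (hx t ht).continuousAt.continuousWithinAt
  refine fun t ht => ⟨pos_of_hasDerivAt_eq_mul_self (w := fun s => 1 - x s)
    (h := fun s => -(k s * (c * x s + 1))) (fun s hs => ?_) (by fun_prop) (by linarith) t ht,
    pos_of_hasDerivAt_eq_mul_self (w := fun s => c * x s + 1)
    (h := fun s => c * k s * (1 - x s)) (fun s hs => ?_) (by fun_prop) hxc t ht⟩
  · exact ((hx s hs).const_sub 1).congr_deriv (by ring)
  · exact (((hx s hs).const_mul c).add_const 1).congr_deriv (by ring)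

lemma tendsto_of_tendsto_log_sub_atBot {x : ℝ → ℝ} {a : ℝ} (hx : ∀ᶠ t in atTop, x t < a)
    (hlog : Tendsto (fun t => log (a - x t)) atTop atBot) : Tendsto x atTop (𝓝 a) := by
  have hsub : Tendsto (fun t => a - x t) atTop (𝓝 0) := by
    refine (tendsto_exp_atBot.comp hlog).congr' ?_
    filter_upwards [hx] with t ht
    exact exp_log (sub_pos.2 ht)
  simpa using (tendsto_const_nhds (x := a)).sub hsub

namespace SqrtLogistic

variable {G x : ℝ → ℝ} {c : ℝ}

lemma monotoneOn_and_mem_Ico (hG : Continuous G) (hGpos : ∀ y, 0 < G y)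
    (hx0 : x 0 = 0)
    (hx : ∀ t ≥ 0, HasDerivAt x (G (x t) * (1 - x t) * (c * x t + 1) / √(t + 1)) t) :
    MonotoneOn x (Ici 0) ∧ ∀ t ≥ 0, 0 ≤ x t ∧ x t < 1 := by
  have hx' : ∀ t ≥ 0, HasDerivAt x (G (x t) / √(t + 1) * (1 - x t) * (c * x t + 1)) t :=
    fun t ht => (hx t ht).congr_deriv (by ring)
  have hk : ContinuousOn (fun t => G (x t) / √(t + 1)) (Ici 0) :=
    (hG.comp_continuousOn fun t ht => (hx t ht).continuousAt.continuousWithinAt).div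
      (by fun_prop) fun t ht => (sqrt_pos.2 (by linarith [mem_Ici.1 ht])).ne'
  have hbounds := pos_of_hasDerivAt_logistic hk (by simp [hx0]) (by simp [hx0]) hx'
  have hmono : MonotoneOn x (Ici 0) := monotoneOn_Ici_of_hasDerivAt_nonneg hx' fun t ht =>
    mul_nonneg (mul_nonneg (div_nonneg (hGpos _).le (sqrt_nonneg _)) (hbounds t ht).1.le)
      (hbounds t ht).2.le
  exact ⟨hmono, fun t ht => ⟨hx0 ▸ hmono self_mem_Ici ht ht, sub_pos.1 (hbounds t ht).1⟩⟩

lemma hasDerivAt_log_one_sub {t : ℝ} (hxt : x t < 1)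
    (hx : HasDerivAt x (G (x t) * (1 - x t) * (c * x t + 1) / √(t + 1)) t) :
    HasDerivAt (fun t => log (1 - x t)) (-(G (x t) * (c * x t + 1)) / √(t + 1)) t :=
  (hx.const_sub 1).log (sub_pos.2 hxt).ne' |>.congr_deriv (by
    field_simp [(sub_pos.2 hxt).ne'])

lemma tendsto_one (hG : Continuous G) (hGpos : ∀ y, 0 < G y)
    (hc : 0 ≤ c) (hx0 : x 0 = 0)
    (hx : ∀ t ≥ 0, HasDerivAt x (G (x t) * (1 - x t) * (c * x t + 1) / √(t + 1)) t) :
    Tendsto x atTop (𝓝 1) := by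
  have hmem := (monotoneOn_and_mem_Ico hG hGpos hx0 hx).2
  obtain ⟨m, hm, hGm⟩ := isCompact_Icc.exists_forall_le' hG.continuousOn
    (fun y (_ : y ∈ Icc (0 : ℝ) 1) => hGpos y)
  refine tendsto_of_tendsto_log_sub_atBot
    ((eventually_ge_atTop 0).mono fun t ht => (hmem t ht).2)
    (tendsto_atBot_of_hasDerivAt_div_sqrt_add_one (by norm_num) (neg_lt_zero.2 hm)
      (fun t ht => hasDerivAt_log_one_sub (hmem t ht).2 (hx t ht))
      fun t ht => ?_)
  rw [neg_le_neg_iff]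
  have hGt := hGm (x t) ⟨(hmem t ht).1, (hmem t ht).2.le⟩
  nlinarith [(hmem t ht).1, mul_nonneg hc (hmem t ht).1]

lemma tendsto_log_one_sub_div_sqrt (hG : Continuous G) (hGpos : ∀ y, 0 < G y)
    (hc : 0 ≤ c) (hx0 : x 0 = 0)
    (hx : ∀ t ≥ 0, HasDerivAt x (G (x t) * (1 - x t) * (c * x t + 1) / √(t + 1)) t) :
    Tendsto (fun t => log (1 - x t) / √t) atTop (𝓝 (-(2 * (G 1 * (c + 1))))) := by
  have hmem := (monotoneOn_and_mem_Ico hG hGpos hx0 hx).2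
  have hlim := tendsto_one hG hGpos hc hx0 hx
  have hrate : Tendsto (fun t => -(G (x t) * (c * x t + 1))) atTop (𝓝 (-(G 1 * (c + 1)))) := by
    simpa using ((hG.tendsto 1).comp hlim |>.mul ((hlim.const_mul c).add_const 1)).neg
  rw [← mul_neg]
  exact tendsto_div_sqrt_of_hasDerivAt_div_sqrt_add_one
    ((eventually_ge_atTop 0).mono fun t ht =>
      hasDerivAt_log_one_sub (hmem t ht).2 (hx t ht)) hrate

end SqrtLogistic

noncomputable def lnScalingGain (c β y : ℝ) : ℝ :=
  2 * exp (β * y) / (c * exp (β * y) + exp β)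

lemma continuous_lnScalingGain {c : ℝ} (hc : 0 ≤ c) (β : ℝ) :
    Continuous (lnScalingGain c β) :=
  Continuous.div (by fun_prop) (by fun_prop) fun y => by positivity

lemma lnScalingGain_pos {c : ℝ} (hc : 0 ≤ c) (β y : ℝ) : 0 < lnScalingGain c β y := by
  unfold lnScalingGain
  positivity

lemma lnScalingGain_one_mul {c : ℝ} (hc : 0 ≤ c) (β : ℝ) :
    lnScalingGain c β 1 * (c + 1) = 2 := by
  rw [lnScalingGain, mul_one]
  field_simp

lemma lnScalingGain_mul_div_sqrt (c β y t : ℝ) :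
    lnScalingGain c β y * (1 - y) * (c * y + 1) / √(t + 1) =
      2 * exp (β * y) * (1 - y) * (c * y + 1) / (√(t + 1) * (c * exp (β * y) + exp β)) := by
  simp only [lnScalingGain, div_eq_mul_inv, mul_inv]
  ring

theorem lnScaling_symmetric_ODE_asymptotics_general (n : ℕ) (hn : 2 ≤ n) (β : ℝ)
    (γ : ℝ → ℝ) (hγ0 : γ 0 = 0)
    (hdyn : ∀ t, 0 ≤ t → HasDerivAt γ
      (2 * Real.exp (β * γ t) * (1 - γ t) * ((n - 1) * γ t + 1) /
        (Real.sqrt (t + 1) * ((n - 1) * Real.exp (β * γ t) + Real.exp β))) t) :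
    MonotoneOn γ (Set.Ici 0) ∧
    (∀ t, 0 ≤ t → 0 ≤ γ t ∧ γ t < 1) ∧
    Tendsto γ atTop (nhds 1) ∧
    Tendsto (fun t => Real.log (1 - γ t) / Real.sqrt t) atTop (nhds (-4)) := by
  have hc : (0 : ℝ) ≤ n - 1 := by
    have : (2 : ℝ) ≤ n := by exact_mod_cast hn
    linarith
  have hγ : ∀ t ≥ 0, HasDerivAt γ
      (lnScalingGain (n - 1) β (γ t) * (1 - γ t) * ((n - 1) * γ t + 1) / √(t + 1)) t :=
    fun t ht => lnScalingGain_mul_div_sqrt (n - 1) β (γ t) t ▸ hdyn t ht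
  have hG := continuous_lnScalingGain hc β
  have hGpos := lnScalingGain_pos hc β
  obtain ⟨hmono, hmem⟩ := SqrtLogistic.monotoneOn_and_mem_Ico hG hGpos hγ0 hγ
  refine ⟨hmono, hmem, SqrtLogistic.tendsto_one hG hGpos hc hγ0 hγ, ?_⟩
  have hlog := SqrtLogistic.tendsto_log_one_sub_div_sqrt hG hGpos hc hγ0 hγ
  rwa [lnScalingGain_one_mul hc, show -(2 * 2 : ℝ) = -4 by norm_num] at hlog

/-- LN-Scaling symmetric cosine-similarity ODE: asymptotics. -/
theorem lnScaling_symmetric_ODE_asymptotics (n : ℕ) (hn : 2 ≤ n) (β : ℝ) (hβ : 0 < β)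
    (γ : ℝ → ℝ) (hγ0 : γ 0 = 0)
    (hdyn : ∀ t, 0 ≤ t → HasDerivAt γ
      (2 * Real.exp (β * γ t) * (1 - γ t) * ((n - 1) * γ t + 1) /
        (Real.sqrt (t + 1) * ((n - 1) * Real.exp (β * γ t) + Real.exp β))) t) :
    MonotoneOn γ (Set.Ici 0) ∧
    (∀ t, 0 ≤ t → 0 ≤ γ t ∧ γ t < 1) ∧
    Tendsto γ atTop (nhds 1) ∧
    Tendsto (fun t => Real.log (1 - γ t) / Real.sqrt t) atTop (nhds (-4)) :=
  lnScaling_symmetric_ODE_asymptotics_general n hn β γ hγ0 hdyn
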